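/- Let 0 ≤ t < 1 and let (f_i : S_i × X_i → N_i)_{i≥1} be a sequence of biregular irreducible functions with regularity sets M_i such that |X_i| → ∞, lim_{i→∞} (log|M_i|)/(log|X_i|) = 1 − t, and liminf_{i→∞} [min_{m∈M_i} (−log λ₂(f_i,m))] / (log|X_i|) ≥ t. Then the limit lim_{i→∞} [min_{m∈M_i} (−log λ₂(f_i,m))] / (log|X_i|) exists and equals t. -/

import Mathlib

/-!
For `m ∈ M` the matrix `P = P_{f,m}` is symmetric and stochastic, so its eigenvalues are
real and at most `1`, and all its diagonal entries equal `1 / d_S`; hence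
`|X| / d_S = tr P ≤ 1 + (|X| - 1) λ₂(f,m)`. For a fixed `s` the fibres of `f(s,·)` over `M`
are disjoint of size `d_S`, so `|M| d_S ≤ |X|`. Together, `λ₂(f,m) ≥ |M| / (2|X|)` once
`|M| ≥ 2`, i.e. `-log λ₂(f,m) ≤ 1 + log|X| - log|M|`. Divided by `log|X|` this upper bound
tends to `1 - (1 - t) = t`, which squeezes the sequence against the assumed lower bound.
-/

open MeasureTheory Filter
open scoped ENNReal

noncomputable section
/-- The second-largest eigenvalue modulus of a real matrix `P` (intended: symmetric with
row sums `1`, so that its characteristic polynomial splits over `ℝ` and the largest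
eigenvalue has the all-ones eigenvector): the eigenvalues of `P` with multiplicity are the
roots of its characteristic polynomial; we sort them increasingly, drop (one copy of) the
largest one, and take the maximum modulus of the remaining ones.  For eigenvalues
`μ₁ ≥ μ₂ ≥ ... ≥ μ_n` this is `max (|μ₂|, |μ_n|)`. -/
def secondEVmod {n : Type*} [Fintype n] [DecidableEq n] (P : Matrix n n ℝ) : ℝ :=
  ((P.charpoly.roots.sort (· ≤ ·)).dropLast.map (fun μ => |μ|)).foldr max 0

/-- The symmetric stochastic matrix `P_{f,m}` associated with `f : S × X → N` and a
message `m`, with `(x,x')` entry `|{s : f(s,x) = f(s,x') = m}| / (d_S · d_X)`. -/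
def briMatrix {S X N : Type*} [Fintype S] [DecidableEq N]
    (f : S → X → N) (m : N) (dS dX : ℕ) : Matrix X X ℝ :=
  Matrix.of fun x x' =>
    ((Finset.univ.filter fun s : S => f s x = m ∧ f s x' = m).card : ℝ) / (dS * dX)

/-- `λ₂(f,m)`: the second-largest eigenvalue modulus of the matrix `P_{f,m}`. -/
def lam2 {S X N : Type*} [Fintype S] [Fintype X] [DecidableEq X] [DecidableEq N]
    (f : S → X → N) (m : N) (dS dX : ℕ) : ℝ :=
  secondEVmod (briMatrix f m dS dX)

/-- `f : S × X → N` is a biregular irreducible function with regularity set `M` and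
degrees `(d_S, d_X)` (positive integers): for every `m ∈ M`, every `s` has exactly `d_S`
preimages `x` with `f(s,x) = m`, every `x` has exactly `d_X` preimages `s` with
`f(s,x) = m`, and the matrix `P_{f,m}` has second-largest eigenvalue modulus `< 1`. -/
structure IsBRI {S X N : Type*} [Fintype S] [Fintype X] [DecidableEq X] [DecidableEq N]
    (f : S → X → N) (M : Set N) (dS dX : ℕ) : Prop where
  dS_pos : 0 < dS
  dX_pos : 0 < dX
  regS : ∀ m ∈ M, ∀ s : S, (Finset.univ.filter fun x : X => f s x = m).card = dS
  regX : ∀ m ∈ M, ∀ x : X, (Finset.univ.filter fun s : S => f s x = m).card = dX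
  irred : ∀ m ∈ M, lam2 f m dS dX < 1

open Polynomial

namespace Matrix

variable {n : Type*} [Fintype n] [DecidableEq n]

-- Gershgorin: `|μ - A k k| ≤ ∑_{j ≠ k} A k j = 1 - A k k` for some row `k`.
theorem le_one_of_isRoot_charpoly_of_mem_rowStochastic {A : Matrix n n ℝ}
    (hA : A ∈ rowStochastic ℝ n) {μ : ℝ} (hμ : A.charpoly.IsRoot μ) : μ ≤ 1 := by
  have hμ' : Module.End.HasEigenvalue (toLin' A) μ := by
    rw [Module.End.hasEigenvalue_iff_mem_spectrum, spectrum_toLin']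
    exact mem_spectrum_of_isRoot_charpoly hμ
  obtain ⟨k, hk⟩ := eigenvalue_mem_ball hμ'
  have hrow : ∑ j ∈ Finset.univ.erase k, ‖A k j‖ = 1 - A k k := by
    rw [← sum_row_of_mem_rowStochastic hA k, ← Finset.add_sum_erase _ _ (Finset.mem_univ k)]
    simp [Real.norm_eq_abs, abs_of_nonneg (nonneg_of_mem_rowStochastic hA)]
  rw [Metric.mem_closedBall, Real.dist_eq, hrow] at hk
  linarith [le_abs_self (μ - A k k)]

theorem trace_le_one_add_mul_secondEVmod {A : Matrix n n ℝ} (hA : A.charpoly.Splits)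
    (hle : ∀ μ ∈ A.charpoly.roots, μ ≤ 1) :
    A.trace ≤ 1 + (Fintype.card n - 1 : ℝ) * secondEVmod A := by
  have htrace : A.trace = (A.charpoly.roots.sort (· ≤ ·)).sum := by
    rw [trace_eq_sum_roots_charpoly_of_splits hA, ← Multiset.sum_coe, Multiset.sort_eq]
  have hlen : (A.charpoly.roots.sort (· ≤ ·)).length = Fintype.card n := by
    rw [Multiset.length_sort, splits_iff_card_roots.mp hA, charpoly_natDegree_eq_dim]
  have hmem : ∀ μ, μ ∈ A.charpoly.roots.sort (· ≤ ·) → μ ≤ 1 := fun μ hμ =>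
    hle μ ((Multiset.mem_sort _).mp hμ)
  unfold secondEVmod
  rw [htrace]
  rcases List.eq_nil_or_concat (A.charpoly.roots.sort (· ≤ ·)) with h | ⟨l, μ, h⟩
  · simp [h]
  rw [h, List.concat_eq_append] at hlen hmem ⊢
  rw [List.dropLast_concat, List.sum_append, List.sum_singleton]
  set E := (l.map fun μ => |μ|).foldr max 0
  have hl : l.sum ≤ l.length • E := List.sum_le_card_nsmul l E fun x hx =>
    List.le_max_of_le' 0 (List.mem_map_of_mem hx) (le_abs_self x)
  have hcard : (Fintype.card n : ℝ) - 1 = l.length := by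
    rw [← hlen, List.length_append, List.length_singleton]; push_cast; ring
  rw [hcard, ← nsmul_eq_mul]
  linarith [hmem μ (by simp)]

end Matrix

theorem card_mul_le_card_of_regS {S X N : Type*} [Fintype X] [DecidableEq N] {f : S → X → N}
    {dS : ℕ} (s : S) {T : Finset N}
    (hS : ∀ m ∈ T, (Finset.univ.filter fun x : X => f s x = m).card = dS) :
    T.card * dS ≤ Fintype.card X := by
  rw [← Finset.sum_const_nat hS, Finset.sum_card_fiberwise_eq_card_filter]
  exact Finset.card_le_univ _

theorem neg_logb_le_of_le_one_add_mul {c x lam : ℝ} (hc : 2 ≤ c) (hx : 1 ≤ x)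
    (h : c ≤ 1 + (x - 1) * lam) :
    -Real.logb 2 lam ≤ 1 + Real.logb 2 x - Real.logb 2 c := by
  have hlam : 0 < lam := by nlinarith
  have hq : c / (2 * x) ≤ lam := by
    rw [div_le_iff₀ (by positivity)]
    nlinarith
  have hlog := Real.logb_le_logb_of_le one_lt_two (by positivity) hq
  rw [Real.logb_div (by positivity) (by positivity), Real.logb_mul two_ne_zero (by positivity),
    Real.logb_self_eq_one one_lt_two] at hlog
  linarith

section BRI

variable {S X N : Type*} [Fintype S] [DecidableEq N] {f : S → X → N} {m : N} {dS dX : ℕ}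

theorem briMatrix_isHermitian (f : S → X → N) (m : N) (dS dX : ℕ) :
    (briMatrix f m dS dX).IsHermitian := by
  refine Matrix.IsHermitian.ext fun x x' => ?_
  simp only [briMatrix, Matrix.of_apply, star_trivial, and_comm]

theorem sum_card_filter_and_eq [Fintype X]
    (hS : ∀ s : S, (Finset.univ.filter fun x : X => f s x = m).card = dS)
    (hX : ∀ x : X, (Finset.univ.filter fun s : S => f s x = m).card = dX) (x : X) :
    ∑ x' : X, (Finset.univ.filter fun s : S => f s x = m ∧ f s x' = m).card = dX * dS := by
  have hswap := Finset.sum_card_bipartiteAbove_eq_sum_card_bipartiteBelow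
    (s := Finset.univ.filter fun s : S => f s x = m) (t := (Finset.univ : Finset X))
    (r := fun s x' => f s x' = m)
  simp only [Finset.bipartiteAbove, Finset.bipartiteBelow, Finset.filter_filter] at hswap
  rw [← hswap, Finset.sum_congr rfl fun s _ => hS s, Finset.sum_const, hX x, smul_eq_mul]

theorem briMatrix_mem_rowStochastic [Fintype X] [DecidableEq X] (hdS : 0 < dS) (hdX : 0 < dX)
    (hS : ∀ s : S, (Finset.univ.filter fun x : X => f s x = m).card = dS)
    (hX : ∀ x : X, (Finset.univ.filter fun s : S => f s x = m).card = dX) :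
    briMatrix f m dS dX ∈ Matrix.rowStochastic ℝ X := by
  refine Matrix.mem_rowStochastic_iff_sum.mpr
    ⟨fun x x' => by simp only [briMatrix, Matrix.of_apply]; positivity, fun x => ?_⟩
  simp only [briMatrix, Matrix.of_apply, ← Finset.sum_div, ← Nat.cast_sum,
    sum_card_filter_and_eq hS hX x]
  push_cast
  rw [mul_comm, div_self (by positivity)]

theorem trace_briMatrix [Fintype X] (hdX : 0 < dX)
    (hX : ∀ x : X, (Finset.univ.filter fun s : S => f s x = m).card = dX) :
    (briMatrix f m dS dX).trace = Fintype.card X / dS := by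
  have hdiag : ∀ x : X, briMatrix f m dS dX x x = 1 / dS := fun x => by
    simp only [briMatrix, Matrix.of_apply, and_self, hX x]
    field_simp
  simp only [Matrix.trace, Matrix.diag, hdiag, Finset.sum_const, Finset.card_univ,
    nsmul_eq_mul]
  ring

namespace IsBRI

variable {M : Set N}

theorem card_le_one_add_mul_lam2 [Fintype X] [DecidableEq X] [Nonempty X]
    (hf : IsBRI f M dS dX) (hm : m ∈ M) :
    (Nat.card M : ℝ) ≤ 1 + (Fintype.card X - 1 : ℝ) * lam2 f m dS dX := by
  obtain ⟨x⟩ := ‹Nonempty X›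
  obtain ⟨s, -⟩ : (Finset.univ.filter fun s : S => f s x = m).Nonempty := by
    rw [← Finset.card_pos, hf.regX m hm x]; exact hf.dX_pos
  have hcount : (Nat.card M : ℝ) ≤ Fintype.card X / dS := by
    rw [le_div_iff₀ (by exact_mod_cast hf.dS_pos)]
    rcases M.finite_or_infinite with hM | hM
    · rw [Nat.card_eq_card_finite_toFinset hM]
      exact_mod_cast card_mul_le_card_of_regS s fun m' hm' =>
        hf.regS m' (hM.mem_toFinset.mp hm') s
    · simp [Set.Infinite.to_subtype hM]
  have hP := briMatrix_mem_rowStochastic hf.dS_pos hf.dX_pos (hf.regS m hm) (hf.regX m hm)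
  have htrace := Matrix.trace_le_one_add_mul_secondEVmod
    (briMatrix_isHermitian f m dS dX).splits_charpoly
    fun μ hμ => Matrix.le_one_of_isRoot_charpoly_of_mem_rowStochastic hP (isRoot_of_mem_roots hμ)
  rw [trace_briMatrix hf.dX_pos (hf.regX m hm)] at htrace
  exact hcount.trans htrace

theorem sInf_neg_logb_lam2_le [Fintype X] [DecidableEq X] [Finite N] [Nonempty X]
    (hf : IsBRI f M dS dX) (hM : 2 ≤ Nat.card M) :
    sInf ((fun m => -Real.logb 2 (lam2 f m dS dX)) '' M) ≤
      1 + Real.logb 2 (Fintype.card X) - Real.logb 2 (Nat.card M) := by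
  obtain ⟨⟨m, hm⟩⟩ : Nonempty M := (Nat.card_pos_iff.mp (by omega)).1
  refine (csInf_le (M.toFinite.image _).bddBelow ⟨m, hm, rfl⟩).trans ?_
  exact neg_logb_le_of_le_one_add_mul (by exact_mod_cast hM)
    (by exact_mod_cast Fintype.card_pos) (hf.card_le_one_add_mul_lam2 hm)

end IsBRI

end BRI

theorem stmt_17_general (t : ℝ) (ht1 : t < 1)
    (sS sX sN : ℕ → ℕ) (f : ∀ i, Fin (sS i) → Fin (sX i) → Fin (sN i))
    (M : ∀ i, Set (Fin (sN i))) (dS dX : ℕ → ℕ)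
    (hBRI : ∀ i, IsBRI (f i) (M i) (dS i) (dX i))
    (hX : Tendsto (fun i => (sX i : ℝ)) atTop atTop)
    (hrate : Tendsto (fun i => Real.logb 2 (Nat.card (M i)) / Real.logb 2 (sX i)) atTop
      (nhds (1 - t)))
    (hEV : ∀ ε > 0, ∀ᶠ i in atTop,
      t - ε ≤ sInf ((fun m => -Real.logb 2 (lam2 (f i) m (dS i) (dX i))) '' (M i)) /
        Real.logb 2 (sX i)) :
    Tendsto
      (fun i => sInf ((fun m => -Real.logb 2 (lam2 (f i) m (dS i) (dX i))) '' (M i)) /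
        Real.logb 2 (sX i))
      atTop (nhds t) := by
  have hL : Tendsto (fun i => Real.logb 2 (sX i)) atTop atTop :=
    (Real.tendsto_logb_atTop one_lt_two).comp hX
  have hM : ∀ᶠ i in atTop, 2 ≤ Nat.card (M i) := by
    filter_upwards [(hL.num (by linarith) hrate).eventually_gt_atTop 0] with i hi
    by_contra! h
    linarith [Real.logb_nonpos one_lt_two (Nat.cast_nonneg _)
      (by exact_mod_cast Nat.le_of_lt_succ h : (Nat.card (M i) : ℝ) ≤ 1)]
  have hupper : Tendsto (fun i => (1 + Real.logb 2 (sX i) - Real.logb 2 (Nat.card (M i))) /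
      Real.logb 2 (sX i)) atTop (nhds t) := by
    have hlim := (hL.inv_tendsto_atTop.add_const 1).sub hrate
    rw [zero_add, sub_sub_cancel] at hlim
    refine hlim.congr' ?_
    filter_upwards [hL.eventually_gt_atTop 0] with i hi
    rw [Pi.inv_apply]
    field_simp
  have hle : ∀ᶠ i in atTop,
      sInf ((fun m => -Real.logb 2 (lam2 (f i) m (dS i) (dX i))) '' (M i)) / Real.logb 2 (sX i) ≤
        (1 + Real.logb 2 (sX i) - Real.logb 2 (Nat.card (M i))) / Real.logb 2 (sX i) := by
    filter_upwards [hM, hX.eventually_ge_atTop 1, hL.eventually_gt_atTop 0] with i hMi hXi hLi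
    have : Nonempty (Fin (sX i)) := Fin.pos_iff_nonempty.mp (by exact_mod_cast hXi)
    gcongr
    simpa using (hBRI i).sInf_neg_logb_lam2_le hMi
  refine tendsto_order.2 ⟨fun a ha => ?_, fun a ha => ?_⟩
  · filter_upwards [hEV ((t - a) / 2) (by linarith)] with i hi
    linarith
  · filter_upwards [hle, hupper.eventually (gt_mem_nhds ha)] with i hi hi'
    linarith

/-- **Lemma 7 of the paper.** If a sequence of biregular irreducible
functions satisfies `|X_i| → ∞`, `log|M_i|/log|X_i| → 1 − t` and
`liminf_i (min_{m ∈ M_i}(−log λ₂(f_i,m)))/log|X_i| ≥ t` (in `∀ ε > 0`-eventual form),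
then the limit `lim_i (min_{m ∈ M_i}(−log λ₂(f_i,m)))/log|X_i|` exists and equals `t`. -/
theorem stmt_17 (t : ℝ) (ht0 : 0 ≤ t) (ht1 : t < 1)
    (sS sX sN : ℕ → ℕ) (f : ∀ i, Fin (sS i) → Fin (sX i) → Fin (sN i))
    (M : ∀ i, Set (Fin (sN i))) (dS dX : ℕ → ℕ)
    (hBRI : ∀ i, IsBRI (f i) (M i) (dS i) (dX i))
    (hX : Tendsto (fun i => (sX i : ℝ)) atTop atTop)
    (hrate : Tendsto (fun i => Real.logb 2 (Nat.card (M i)) / Real.logb 2 (sX i)) atTop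
      (nhds (1 - t)))
    (hEV : ∀ ε > 0, ∀ᶠ i in atTop,
      t - ε ≤ sInf ((fun m => -Real.logb 2 (lam2 (f i) m (dS i) (dX i))) '' (M i)) /
        Real.logb 2 (sX i)) :
    Tendsto
      (fun i => sInf ((fun m => -Real.logb 2 (lam2 (f i) m (dS i) (dX i))) '' (M i)) /
        Real.logb 2 (sX i))
      atTop (nhds t) :=
  stmt_17_general t ht1 sS sX sN f M dS dX hBRI hX hrate hEV

end
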